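/- For any q-ary DMC W, bijective kernel g : 𝒳^ℓ → 𝒳^ℓ, index i ∈ {0,…,ℓ-1}, and x, x' ∈ 𝒳 with x ≠ x', the Bhattacharyya parameter of the i-th subchannel satisfies (1/q^{2ℓ-2-i}) · Z_min(W)^{D^{(i)}_{x,x'}} ≤ Z_{x,x'}(W^{(i)}) ≤ q^{ℓ-1-i} · Z_max(W)^{D^{(i)}_{x,x'}}. -/

import Mathlib

open MeasureTheory Filter Real
open scoped Classical

noncomputable section

namespace Polar

/-- `IsChannel W` : `W x y` is the probability of output `y` given input `x`,
each row is a probability distribution. -/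
def IsChannel {X Y : Type*} (W : X → Y → ℝ) : Prop :=
  (∀ x y, 0 ≤ W x y) ∧ ∀ x, HasSum (W x) 1

/-- Bhattacharyya parameter `Z_{x,x'}(W)` between inputs `x` and `x'`. -/
def Zb {X Y : Type*} (W : X → Y → ℝ) (x x' : X) : ℝ :=
  ∑' y, Real.sqrt (W x y * W x' y)

/-- `Z_max(W) = max_{x ≠ x'} Z_{x,x'}(W)`. -/
def Zmax {X Y : Type*} (W : X → Y → ℝ) : ℝ :=
  sSup {z | ∃ x x', x ≠ x' ∧ z = Zb W x x'}

/-- `Z_min(W) = min_{x,x'} Z_{x,x'}(W)`. -/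
def Zmin {X Y : Type*} (W : X → Y → ℝ) : ℝ :=
  sInf {z | ∃ x x', z = Zb W x x'}

/-- The subchannel `W^{(i)} : X → Y^ℓ × X^i` arising from the kernel `g`. -/
def subCh {X Y : Type*} [Fintype X] {ℓ : ℕ} (W : X → Y → ℝ)
    (g : (Fin ℓ → X) → Fin ℓ → X) (i : Fin ℓ) :
    X → ((Fin ℓ → Y) × (Fin i → X)) → ℝ :=
  fun ui p =>
    (1 / (Fintype.card X : ℝ) ^ (ℓ - 1)) *
      ∑ u : Fin ℓ → X,
        (if u i = ui ∧ (∀ j : Fin i, u ⟨j.1, j.2.trans i.2⟩ = p.2 j) then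
          ∏ j, W (g u j) (p.1 j) else 0)

/-- Partial distance `D^{(i)}_{x,x'}(u_0^{i-1})` of the kernel `g`. -/
def partialDist {X : Type*} {ℓ : ℕ} (g : (Fin ℓ → X) → Fin ℓ → X) (i : Fin ℓ)
    (up : Fin i → X) (x x' : X) : ℕ :=
  sInf {d | ∃ v w : Fin ℓ → X,
    (v i = x ∧ ∀ j : Fin i, v ⟨j.1, j.2.trans i.2⟩ = up j) ∧
    (w i = x' ∧ ∀ j : Fin i, w ⟨j.1, j.2.trans i.2⟩ = up j) ∧
    hammingDist (g v) (g w) = d}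

/-- `D^{(i)}_{x,x'} = min_{u_0^{i-1}} D^{(i)}_{x,x'}(u_0^{i-1})`. -/
def partialDist' {X : Type*} {ℓ : ℕ} (g : (Fin ℓ → X) → Fin ℓ → X) (i : Fin ℓ)
    (x x' : X) : ℕ :=
  sInf {d | ∃ up : Fin i → X, partialDist g i up x x' = d}

/-!
Up to the factor `q^{-(ℓ-1)}`, `W^{(i)}(· | a)` is the sum, over the words `u` with `u_i = a`,
of the channel `V_u` that outputs `y ∼ W^ℓ(· | g u)` together with the prefix `u_0^{i-1}`.
As `√` is subadditive, the Bhattacharyya parameter of two such sums is at most the sum of the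
pairwise parameters `Z(V_v, V_w)` over `v_i = x`, `w_i = x'`, and at least each one of them.
`Z(V_v, V_w)` vanishes unless `v` and `w` share their prefix, and then equals
`∏_j Z_{(g v)_j, (g w)_j}(W)`, which lies between `Z_min^d` and `Z_max^d` for `d = d(g v, g w)`;
as `Z_max ≤ 1` and `d ≥ D^{(i)}_{x,x'}`, each term is at most `Z_max^D`. At most `q^{2ℓ-2-i}`
pairs share a prefix, and some such pair has `d = D^{(i)}_{x,x'}`.
-/

lemma sqrt_sum_le_sum_sqrt {ι : Type*} (s : Finset ι) {f : ι → ℝ} (hf : ∀ i ∈ s, 0 ≤ f i) :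
    √(∑ i ∈ s, f i) ≤ ∑ i ∈ s, √(f i) := by
  rw [Real.sqrt_le_left (Finset.sum_nonneg fun i _ => Real.sqrt_nonneg _)]
  calc ∑ i ∈ s, f i = ∑ i ∈ s, √(f i) ^ 2 :=
        Finset.sum_congr rfl fun i hi => (Real.sq_sqrt (hf i hi)).symm
    _ ≤ (∑ i ∈ s, √(f i)) ^ 2 := Finset.sum_sq_le_sq_sum_of_nonneg fun i _ => Real.sqrt_nonneg _

lemma sqrt_sum_mul_sum_le {ι : Type*} (s t : Finset ι) {a b : ι → ℝ}
    (ha : ∀ i, 0 ≤ a i) (hb : ∀ i, 0 ≤ b i) :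
    √((∑ v ∈ s, a v) * ∑ w ∈ t, b w) ≤ ∑ v ∈ s, ∑ w ∈ t, √(a v * b w) := by
  simp_rw [Real.sqrt_mul (ha _), Real.sqrt_mul (Finset.sum_nonneg fun v _ => ha v),
    ← Finset.mul_sum, ← Finset.sum_mul]
  gcongr
  · exact sqrt_sum_le_sum_sqrt s fun v _ => ha v
  · exact sqrt_sum_le_sum_sqrt t fun w _ => hb w

section Mixture

variable {ι Z : Type*} {f : ι → Z → ℝ} {B : ι → ι → ℝ}

lemma hasSum_sum_sum_sqrt_mul (s t : Finset ι)
    (hB : ∀ v w, HasSum (fun z => √(f v z * f w z)) (B v w)) :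
    HasSum (fun z => ∑ v ∈ s, ∑ w ∈ t, √(f v z * f w z)) (∑ v ∈ s, ∑ w ∈ t, B v w) :=
  hasSum_sum fun v _ => hasSum_sum fun w _ => hB v w

lemma summable_sqrt_sum_mul_sum (s t : Finset ι) (hf : ∀ v z, 0 ≤ f v z)
    (hB : ∀ v w, HasSum (fun z => √(f v z * f w z)) (B v w)) :
    Summable fun z => √((∑ v ∈ s, f v z) * ∑ w ∈ t, f w z) :=
  (hasSum_sum_sum_sqrt_mul s t hB).summable.of_nonneg_of_le (fun _ => Real.sqrt_nonneg _)
    fun z => sqrt_sum_mul_sum_le s t (hf · z) (hf · z)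

lemma tsum_sqrt_sum_mul_sum_le (s t : Finset ι) (hf : ∀ v z, 0 ≤ f v z)
    (hB : ∀ v w, HasSum (fun z => √(f v z * f w z)) (B v w)) :
    ∑' z, √((∑ v ∈ s, f v z) * ∑ w ∈ t, f w z) ≤ ∑ v ∈ s, ∑ w ∈ t, B v w :=
  calc ∑' z, √((∑ v ∈ s, f v z) * ∑ w ∈ t, f w z)
      ≤ ∑' z, ∑ v ∈ s, ∑ w ∈ t, √(f v z * f w z) :=
        (summable_sqrt_sum_mul_sum s t hf hB).tsum_le_tsum
          (fun z => sqrt_sum_mul_sum_le s t (hf · z) (hf · z))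
          (hasSum_sum_sum_sqrt_mul s t hB).summable
    _ = ∑ v ∈ s, ∑ w ∈ t, B v w := (hasSum_sum_sum_sqrt_mul s t hB).tsum_eq

lemma le_tsum_sqrt_sum_mul_sum {s t : Finset ι} {v w : ι} (hv : v ∈ s) (hw : w ∈ t)
    (hf : ∀ v z, 0 ≤ f v z) (hB : ∀ v w, HasSum (fun z => √(f v z * f w z)) (B v w)) :
    B v w ≤ ∑' z, √((∑ v ∈ s, f v z) * ∑ w ∈ t, f w z) :=
  calc B v w = ∑' z, √(f v z * f w z) := (hB v w).tsum_eq.symm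
    _ ≤ ∑' z, √((∑ v ∈ s, f v z) * ∑ w ∈ t, f w z) :=
      (hB v w).summable.tsum_le_tsum
        (fun z => Real.sqrt_le_sqrt <| mul_le_mul
          (Finset.single_le_sum (fun u _ => hf u z) hv)
          (Finset.single_le_sum (fun u _ => hf u z) hw)
          (hf w z) (Finset.sum_nonneg fun u _ => hf u z))
        (summable_sqrt_sum_mul_sum s t hf hB)

end Mixture

lemma hasSum_mul_of_hasSum {α β : Type*} {f : α → ℝ} {g : β → ℝ} {a b : ℝ}
    (hf : HasSum f a) (hg : HasSum g b) : HasSum (fun p : α × β => f p.1 * g p.2) (a * b) :=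
  hf.mul hg (summable_mul_of_summable_norm hf.summable.norm hg.summable.norm)

lemma hasSum_prod_pi {Y : Type*} {m : ℕ} {f : Fin m → Y → ℝ} {c : Fin m → ℝ}
    (hf : ∀ j, HasSum (f j) (c j)) :
    HasSum (fun y : Fin m → Y => ∏ j, f j (y j)) (∏ j, c j) := by
  induction m with
  | zero => simp
  | succ m ih =>
    have hprod := hasSum_mul_of_hasSum (hf 0) (ih fun j => hf j.succ)
    rw [Fin.prod_univ_succ c, ← (Fin.consEquiv fun _ : Fin (m + 1) => Y).hasSum_iff]
    convert hprod using 2 with p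
    simp [Fin.consEquiv, Fin.prod_univ_succ]

section Channel

variable {X Y : Type*} {W : X → Y → ℝ}

lemma Zb_nonneg (W : X → Y → ℝ) (a b : X) : 0 ≤ Zb W a b :=
  tsum_nonneg fun _ => Real.sqrt_nonneg _

lemma Zb_const_mul {Z : Type*} (V : X → Z → ℝ) {c : ℝ} (hc : 0 ≤ c) (a b : X) :
    Zb (fun a z => c * V a z) a b = c * Zb V a b := by
  simp_rw [Zb, mul_mul_mul_comm c, Real.sqrt_mul (mul_self_nonneg c), Real.sqrt_mul_self hc]
  exact tsum_mul_left

namespace IsChannel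

lemma sqrt_mul_le_add_div_two (hW : IsChannel W) (a b : X) (y : Y) :
    √(W a y * W b y) ≤ (W a y + W b y) / 2 := by
  rw [Real.sqrt_le_left (by linarith [hW.1 a y, hW.1 b y])]
  nlinarith [sq_nonneg (W a y - W b y)]

lemma hasSum_Zb (hW : IsChannel W) (a b : X) :
    HasSum (fun y => √(W a y * W b y)) (Zb W a b) :=
  Summable.hasSum <| (((hW.2 a).add (hW.2 b)).div_const 2).summable.of_nonneg_of_le
    (fun _ => Real.sqrt_nonneg _) (hW.sqrt_mul_le_add_div_two a b)

lemma Zb_le_one (hW : IsChannel W) (a b : X) : Zb W a b ≤ 1 := by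
  have h := ((hW.2 a).add (hW.2 b)).div_const 2
  rw [show ((1 : ℝ) + 1) / 2 = 1 by norm_num] at h
  exact hasSum_le (hW.sqrt_mul_le_add_div_two a b) (hW.hasSum_Zb a b) h

lemma Zb_self (hW : IsChannel W) (a : X) : Zb W a a = 1 := by
  simp_rw [Zb, Real.sqrt_mul_self (hW.1 a _)]
  exact (hW.2 a).tsum_eq

lemma Zb_le_Zmax (hW : IsChannel W) {a b : X} (h : a ≠ b) : Zb W a b ≤ Zmax W :=
  le_csSup ⟨1, by rintro _ ⟨a, b, -, rfl⟩; exact hW.Zb_le_one a b⟩ ⟨a, b, h, rfl⟩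

lemma Zmax_le_one (hW : IsChannel W) : Zmax W ≤ 1 :=
  Real.sSup_le (by rintro _ ⟨a, b, -, rfl⟩; exact hW.Zb_le_one a b) zero_le_one

end IsChannel

lemma Zmax_nonneg (W : X → Y → ℝ) : 0 ≤ Zmax W :=
  Real.sSup_nonneg <| by rintro _ ⟨a, b, -, rfl⟩; exact Zb_nonneg W a b

lemma Zmin_nonneg (W : X → Y → ℝ) : 0 ≤ Zmin W :=
  Real.sInf_nonneg <| by rintro _ ⟨a, b, rfl⟩; exact Zb_nonneg W a b

lemma Zmin_le_Zb (W : X → Y → ℝ) (a b : X) : Zmin W ≤ Zb W a b :=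
  csInf_le ⟨0, by rintro _ ⟨a, b, rfl⟩; exact Zb_nonneg W a b⟩ ⟨a, b, rfl⟩

namespace IsChannel

variable {ι : Type*} [Fintype ι]

lemma prod_Zb_le_Zmax_pow (hW : IsChannel W) (a b : ι → X) :
    ∏ j, Zb W (a j) (b j) ≤ Zmax W ^ hammingDist a b := by
  rw [hammingDist, Finset.card_filter, ← Finset.prod_pow_eq_pow_sum]
  refine Finset.prod_le_prod (fun j _ => Zb_nonneg W _ _) fun j _ => ?_
  split_ifs with h
  · simpa using hW.Zb_le_Zmax h
  · simp [not_not.1 h, hW.Zb_self]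

lemma Zmin_pow_le_prod_Zb (hW : IsChannel W) (a b : ι → X) :
    Zmin W ^ hammingDist a b ≤ ∏ j, Zb W (a j) (b j) := by
  rw [hammingDist, Finset.card_filter, ← Finset.prod_pow_eq_pow_sum]
  refine Finset.prod_le_prod (fun j _ => by positivity [Zmin_nonneg W]) fun j _ => ?_
  split_ifs with h
  · simpa using Zmin_le_Zb W _ _
  · simp [not_not.1 h, hW.Zb_self]

lemma hasSum_sqrt_prod_mul_prod (hW : IsChannel W) {m : ℕ} (a b : Fin m → X) :
    HasSum (fun y : Fin m → Y => √((∏ j, W (a j) (y j)) * ∏ j, W (b j) (y j)))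
      (∏ j, Zb W (a j) (b j)) := by
  simp_rw [← Finset.prod_mul_distrib,
    Real.sqrt_prod _ fun j _ => mul_nonneg (hW.1 _ _) (hW.1 _ _)]
  exact hasSum_prod_pi (f := fun j y => √(W (a j) y * W (b j) y)) fun j => hW.hasSum_Zb _ _

end IsChannel

end Channel

section Kernel

variable {X Y : Type*} {ℓ : ℕ} {W : X → Y → ℝ} (g : (Fin ℓ → X) → Fin ℓ → X) (i : Fin ℓ)

variable (W) in
def prefixCh (u : Fin ℓ → X) (z : (Fin ℓ → Y) × (Fin i → X)) : ℝ :=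
  if Fin.take i i.2.le u = z.2 then ∏ j, W (g u j) (z.1 j) else 0

lemma prefixCh_nonneg (hW : IsChannel W) (u : Fin ℓ → X)
    (z : (Fin ℓ → Y) × (Fin i → X)) : 0 ≤ prefixCh W g i u z := by
  unfold prefixCh
  split_ifs
  exacts [Finset.prod_nonneg fun j _ => hW.1 _ _, le_rfl]

lemma IsChannel.hasSum_sqrt_prefixCh (hW : IsChannel W) (v w : Fin ℓ → X) :
    HasSum (fun z => √(prefixCh W g i v z * prefixCh W g i w z))
      (if Fin.take i i.2.le v = Fin.take i i.2.le w then ∏ j, Zb W (g v j) (g w j) else 0) := by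
  split_ifs with h
  · have hinj : Function.Injective fun y : Fin ℓ → Y => (y, Fin.take i i.2.le v) :=
      fun _ _ hy => congrArg Prod.fst hy
    refine (hinj.hasSum_iff fun z hz => ?_).1 ?_
    · have : Fin.take i i.2.le v ≠ z.2 := fun h' => hz ⟨z.1, by rw [h']⟩
      simp [prefixCh, this]
    · simpa [Function.comp_def, prefixCh, h] using hW.hasSum_sqrt_prod_mul_prod (g v) (g w)
  · convert hasSum_zero with z
    unfold prefixCh
    split_ifs with hv hw <;> first | simp | exact absurd (hv.trans hw.symm) h

variable (W) in
lemma subCh_eq_sum_prefixCh [Fintype X] (a : X) (z : (Fin ℓ → Y) × (Fin i → X)) :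
    subCh W g i a z =
      1 / (Fintype.card X : ℝ) ^ (ℓ - 1) * ∑ u with u i = a, prefixCh W g i u z := by
  simp only [subCh, prefixCh, Finset.sum_filter, ite_and, funext_iff, Fin.take_apply]
  rfl

end Kernel

section PartialDistance

variable {X : Type*} {ℓ : ℕ} {g : (Fin ℓ → X) → Fin ℓ → X} {i : Fin ℓ} {x x' : X}

lemma partialDist'_le_hammingDist {v w : Fin ℓ → X} (hv : v i = x) (hw : w i = x')
    (hvw : Fin.take i i.2.le v = Fin.take i i.2.le w) :
    partialDist' g i x x' ≤ hammingDist (g v) (g w) :=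
  calc partialDist' g i x x' ≤ partialDist g i (Fin.take i i.2.le v) x x' := Nat.sInf_le ⟨_, rfl⟩
    _ ≤ hammingDist (g v) (g w) :=
      Nat.sInf_le ⟨v, w, ⟨hv, fun _ => rfl⟩, ⟨hw, fun j => congrFun hvw.symm j⟩, rfl⟩

variable (g i x x') in
lemma exists_hammingDist_eq_partialDist' :
    ∃ v w : Fin ℓ → X, v i = x ∧ w i = x' ∧ Fin.take i i.2.le v = Fin.take i i.2.le w ∧
      hammingDist (g v) (g w) = partialDist' g i x x' := by
  have hne : {d | ∃ up, partialDist g i up x x' = d}.Nonempty := ⟨_, fun _ => x, rfl⟩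
  obtain ⟨up, hup⟩ := Nat.sInf_mem hne
  let extend (a : X) (j : Fin ℓ) : X := if h : j.1 < i.1 then up ⟨j, h⟩ else a
  obtain ⟨v, w, ⟨hv, hvp⟩, ⟨hw, hwp⟩, hd⟩ := Nat.sInf_mem (s := {d | ∃ v w : Fin ℓ → X,
      (v i = x ∧ ∀ j : Fin i, v ⟨j.1, j.2.trans i.2⟩ = up j) ∧
      (w i = x' ∧ ∀ j : Fin i, w ⟨j.1, j.2.trans i.2⟩ = up j) ∧ hammingDist (g v) (g w) = d})
    ⟨_, extend x, extend x', ⟨by simp [extend], fun j => dif_pos j.2⟩,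
      ⟨by simp [extend], fun j => dif_pos j.2⟩, rfl⟩
  exact ⟨v, w, hv, hw, funext fun j => (hvp j).trans (hwp j).symm, hd.trans hup⟩

end PartialDistance

def commonPrefixPairs {X : Type*} [Fintype X] {ℓ : ℕ} (i : Fin ℓ) (x x' : X) :
    Finset ((Fin ℓ → X) × (Fin ℓ → X)) :=
  {vw ∈ ({v | v i = x} : Finset (Fin ℓ → X)) ×ˢ ({w | w i = x'} : Finset (Fin ℓ → X)) |
    Fin.take i i.2.le vw.1 = Fin.take i i.2.le vw.2}

lemma card_commonPrefixPairs_le {X : Type*} [Fintype X] {ℓ : ℕ} (i : Fin ℓ) (x x' : X) :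
    (commonPrefixPairs i x x').card ≤ Fintype.card X ^ (ℓ - 1) * Fintype.card X ^ (ℓ - 1 - i) := by
  have hcard : Fintype.card (({j : Fin ℓ // j ≠ i} → X) × ({j : Fin ℓ // i < j} → X)) =
      Fintype.card X ^ (ℓ - 1) * Fintype.card X ^ (ℓ - 1 - i) := by
    simp only [Fintype.card_prod, Fintype.card_fun, Fintype.card_subtype, Finset.filter_ne',
      Finset.card_erase_of_mem (Finset.mem_univ i), Finset.card_univ, Fintype.card_fin,
      Finset.filter_lt_eq_Ioi, Fin.card_Ioi]
  rw [← hcard, ← Finset.card_univ]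
  refine Finset.card_le_card_of_injOn (fun vw => (fun j => vw.1 j, fun j => vw.2 j))
    (fun _ _ => Finset.mem_univ _) ?_
  rintro ⟨v, w⟩ hvw ⟨v', w'⟩ hvw' heq
  simp only [commonPrefixPairs, Finset.coe_filter, Finset.mem_product, Finset.mem_filter,
    Finset.mem_univ, true_and, Set.mem_ofPred_eq, Prod.mk.injEq, funext_iff, Subtype.forall] at hvw hvw' heq
  obtain ⟨⟨hv, hw⟩, hvw⟩ := hvw
  obtain ⟨⟨hv', hw'⟩, hvw'⟩ := hvw'
  have hvv' : v = v' := funext fun j => by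
    rcases eq_or_ne j i with rfl | hj
    · rw [hv, hv']
    · exact heq.1 j hj
  refine Prod.ext hvv' (funext fun j => ?_)
  rcases lt_trichotomy j i with hj | rfl | hj
  · exact (hvw ⟨j, hj⟩).symm.trans ((congrFun hvv' j).trans (hvw' ⟨j, hj⟩))
  · exact hw.trans hw'.symm
  · exact heq.2 j hj

section Bounds

variable {X Y : Type*} [Fintype X] {W : X → Y → ℝ} {ℓ : ℕ}
  (g : (Fin ℓ → X) → Fin ℓ → X) (i : Fin ℓ) (x x' : X)

lemma Zb_subCh_eq : Zb (subCh W g i) x x' =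
    1 / (Fintype.card X : ℝ) ^ (ℓ - 1) * ∑' z, √((∑ u with u i = x, prefixCh W g i u z) *
      ∑ u with u i = x', prefixCh W g i u z) := by
  have hsub : subCh W g i = fun a z =>
      1 / (Fintype.card X : ℝ) ^ (ℓ - 1) * ∑ u with u i = a, prefixCh W g i u z :=
    funext₂ (subCh_eq_sum_prefixCh W g i)
  rw [hsub, Zb_const_mul _ (by positivity)]
  rfl

open Finset in
lemma Zb_subCh_le (hW : IsChannel W) : Zb (subCh W g i) x x' ≤
    (Fintype.card X : ℝ) ^ (ℓ - 1 - i.1) * Zmax W ^ partialDist' g i x x' := by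
  set q := (Fintype.card X : ℝ) with hq_def
  set K := Zmax W ^ partialDist' g i x x'
  have hq : 0 < q := Nat.cast_pos.2 (Fintype.card_pos_iff.2 ⟨x⟩)
  have hpair : ∀ v ∈ ({v | v i = x} : Finset (Fin ℓ → X)),
      ∀ w ∈ ({w | w i = x'} : Finset (Fin ℓ → X)),
      (if Fin.take i i.2.le v = Fin.take i i.2.le w then ∏ j, Zb W (g v j) (g w j) else 0) ≤
        if Fin.take i i.2.le v = Fin.take i i.2.le w then K else 0 := by
    intro v hv w hw
    split_ifs with h
    · exact (hW.prod_Zb_le_Zmax_pow _ _).trans (pow_le_pow_of_le_one (Zmax_nonneg W)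
        hW.Zmax_le_one (partialDist'_le_hammingDist (mem_filter.1 hv).2 (mem_filter.1 hw).2 h))
    · exact le_rfl
  rw [Zb_subCh_eq g i x x']
  calc 1 / q ^ (ℓ - 1) * ∑' z, √((∑ u with u i = x, prefixCh W g i u z) *
        ∑ u with u i = x', prefixCh W g i u z)
      ≤ 1 / q ^ (ℓ - 1) * ∑ v : Fin ℓ → X with v i = x, ∑ w : Fin ℓ → X with w i = x',
          if Fin.take i i.2.le v = Fin.take i i.2.le w then K else 0 := by
        gcongr
        exact (tsum_sqrt_sum_mul_sum_le _ _ (prefixCh_nonneg g i hW)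
          (hW.hasSum_sqrt_prefixCh g i)).trans (sum_le_sum fun v hv => sum_le_sum (hpair v hv))
    _ = 1 / q ^ (ℓ - 1) * (#(commonPrefixPairs i x x') * K) := by
        rw [← sum_product', sum_ite, sum_const_zero, add_zero, sum_const, nsmul_eq_mul]
        rfl
    _ ≤ 1 / q ^ (ℓ - 1) * ((q ^ (ℓ - 1) * q ^ (ℓ - 1 - i.1)) * K) := by
        have hK : 0 ≤ K := pow_nonneg (Zmax_nonneg W) _
        gcongr
        rw [hq_def]
        exact_mod_cast card_commonPrefixPairs_le i x x'
    _ = q ^ (ℓ - 1 - i.1) * K := by field_simp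

lemma le_Zb_subCh (hW : IsChannel W) :
    1 / (Fintype.card X : ℝ) ^ (2 * ℓ - 2 - i.1) * Zmin W ^ partialDist' g i x x' ≤
      Zb (subCh W g i) x x' := by
  set q := (Fintype.card X : ℝ)
  have hq : 1 ≤ q := Nat.one_le_cast.2 (Fintype.card_pos_iff.2 ⟨x⟩)
  obtain ⟨v, w, hv, hw, hvw, hd⟩ := exists_hammingDist_eq_partialDist' g i x x'
  have hvx : v ∈ ({u | u i = x} : Finset (Fin ℓ → X)) := by simpa using hv
  have hwx' : w ∈ ({u | u i = x'} : Finset (Fin ℓ → X)) := by simpa using hw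
  have hB := le_tsum_sqrt_sum_mul_sum hvx hwx' (prefixCh_nonneg g i hW)
    (hW.hasSum_sqrt_prefixCh g i)
  rw [if_pos hvw] at hB
  rw [Zb_subCh_eq g i x x', ← hd]
  calc 1 / q ^ (2 * ℓ - 2 - i.1) * Zmin W ^ hammingDist (g v) (g w)
      ≤ 1 / q ^ (ℓ - 1) * Zmin W ^ hammingDist (g v) (g w) := by
        have hexp : ℓ - 1 ≤ 2 * ℓ - 2 - i.1 := by have := i.isLt; omega
        gcongr 1 / ?_ * _
        · exact pow_nonneg (Zmin_nonneg W) _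
        · exact pow_le_pow_right₀ hq hexp
    _ ≤ 1 / q ^ (ℓ - 1) * ∏ j, Zb W (g v j) (g w j) := by
        gcongr
        exact hW.Zmin_pow_le_prod_Zb _ _
    _ ≤ _ := by gcongr

end Bounds

theorem bhattacharyya_subCh_bounds_general {X Y : Type*} [Fintype X]
    (W : X → Y → ℝ) (hW : IsChannel W)
    {ℓ : ℕ} (g : (Fin ℓ → X) → Fin ℓ → X)
    (i : Fin ℓ) (x x' : X) :
    (1 / (Fintype.card X : ℝ) ^ (2 * ℓ - 2 - i.1)) *
        Zmin W ^ partialDist' g i x x' ≤ Zb (subCh W g i) x x' ∧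
      Zb (subCh W g i) x x' ≤
        (Fintype.card X : ℝ) ^ (ℓ - 1 - i.1) *
          Zmax W ^ partialDist' g i x x' :=
  ⟨le_Zb_subCh g i x x' hW, Zb_subCh_le g i x x' hW⟩

/-- bounds on the Bhattacharyya parameter of the subchannel
`W^{(i)}` in terms of the partial distance `D^{(i)}_{x,x'}`. -/
theorem bhattacharyya_subCh_bounds {X Y : Type*} [Fintype X] [Countable Y]
    (hq : 2 ≤ Fintype.card X) (W : X → Y → ℝ) (hW : IsChannel W)
    {ℓ : ℕ} (g : (Fin ℓ → X) → Fin ℓ → X) (hg : Function.Bijective g)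
    (i : Fin ℓ) (x x' : X) (hxx : x ≠ x') :
    (1 / (Fintype.card X : ℝ) ^ (2 * ℓ - 2 - i.1)) *
        Zmin W ^ partialDist' g i x x' ≤ Zb (subCh W g i) x x' ∧
      Zb (subCh W g i) x x' ≤
        (Fintype.card X : ℝ) ^ (ℓ - 1 - i.1) *
          Zmax W ^ partialDist' g i x x' :=
  bhattacharyya_subCh_bounds_general W hW g i x x'

end Polar
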